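/- arXiv:1207.5749 — 7 statements merged into one kernel-verified Lean document; each statement's English description precedes it below -/
import Mathlib

section
/- Let a > -1, 1 < p < ∞, and E ⊆ [0,∞) be a measurable set. Then (∫_E x^a dx)^p ≤ 2^p (a+1)^{1-p} ∫_E x^{(a+1)p-1} dx. -/
/-!
Write `F = ∫_E x^a`. Choose `t` with `∫_0^t x^a dx = F/2`. As `E ⊆ [0, ∞)`, at least half of `F`
comes from `E ∩ [t, ∞)`, where `x^((a+1)p-1) ≥ t^((a+1)(p-1)) x^a`. Hence
`∫_E x^((a+1)p-1) ≥ ((a+1)F/2)^(p-1) F/2`, which rearranges to the claim. When `F = ∞`, the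
same splitting at `t = 1` makes the right-hand side infinite.
-/

open MeasureTheory Set
open scoped ENNReal

theorem setLIntegral_rpow_inter_Iio_le {a t : ℝ} (ha : -1 < a) (ht : 0 ≤ t) {E : Set ℝ}
    (hE : E ⊆ Ici 0) :
    ∫⁻ x in E ∩ Iio t, ENNReal.ofReal (x ^ a) ≤ ENNReal.ofReal (t ^ (a + 1) / (a + 1)) :=
  calc ∫⁻ x in E ∩ Iio t, ENNReal.ofReal (x ^ a)
      ≤ ∫⁻ x in Ioc 0 t, ENNReal.ofReal (x ^ a) := by
        rw [Measure.restrict_congr_set Ioc_ae_eq_Icc]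
        exact lintegral_mono_set fun x hx => ⟨hE hx.1, hx.2.le⟩
    _ = ENNReal.ofReal (t ^ (a + 1) / (a + 1)) := by
        rw [← ofReal_integral_eq_lintegral_ofReal
          (intervalIntegral.intervalIntegrable_rpow' ha).1
          ((ae_restrict_mem measurableSet_Ioc).mono fun x hx => Real.rpow_nonneg hx.1.le a),
          ← intervalIntegral.integral_of_le ht, integral_rpow (Or.inl ha),
          Real.zero_rpow (by linarith), sub_zero]

theorem setLIntegral_rpow_le_add_inter_Ici {a t : ℝ} (ha : -1 < a) (ht : 0 ≤ t) {E : Set ℝ}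
    (hE : E ⊆ Ici 0) :
    ∫⁻ x in E, ENNReal.ofReal (x ^ a) ≤
      ENNReal.ofReal (t ^ (a + 1) / (a + 1)) + ∫⁻ x in E ∩ Ici t, ENNReal.ofReal (x ^ a) :=
  calc ∫⁻ x in E, ENNReal.ofReal (x ^ a)
      ≤ ∫⁻ x in E ∩ Iio t ∪ E ∩ Ici t, ENNReal.ofReal (x ^ a) := by
        rw [← inter_union_distrib_left, Iio_union_Ici, inter_univ]
    _ ≤ _ := (lintegral_union_le _ _ _).trans
        (add_le_add_left (setLIntegral_rpow_inter_Iio_le ha ht hE) _)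

theorem ofReal_rpow_mul_setLIntegral_inter_Ici_le {b c t : ℝ} (hb : 0 ≤ b) (ht : 0 < t)
    (E : Set ℝ) :
    ENNReal.ofReal (t ^ b) * ∫⁻ x in E ∩ Ici t, ENNReal.ofReal (x ^ c) ≤
      ∫⁻ x in E, ENNReal.ofReal (x ^ (b + c)) := by
  rw [← lintegral_const_mul' _ _ ENNReal.ofReal_ne_top]
  refine (setLIntegral_mono (by fun_prop) fun x hx => ?_).trans
    (lintegral_mono_set inter_subset_left)
  have hx0 : 0 < x := ht.trans_le hx.2
  rw [← ENNReal.ofReal_mul (Real.rpow_nonneg ht.le b), Real.rpow_add hx0]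
  gcongr
  exact hx.2

theorem ofReal_rpow_mul_sub_le_setLIntegral_rpow_add {a b t : ℝ} (ha : -1 < a) (hb : 0 ≤ b)
    (ht : 0 < t) {E : Set ℝ} (hE : E ⊆ Ici 0) :
    ENNReal.ofReal (t ^ b) *
        ((∫⁻ x in E, ENNReal.ofReal (x ^ a)) - ENNReal.ofReal (t ^ (a + 1) / (a + 1))) ≤
      ∫⁻ x in E, ENNReal.ofReal (x ^ (b + a)) :=
  (mul_le_mul_right (tsub_le_iff_left.mpr (setLIntegral_rpow_le_add_inter_Ici ha ht.le hE))
    _).trans (ofReal_rpow_mul_setLIntegral_inter_Ici_le hb ht E)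

theorem rpow_eq_two_rpow_mul_rpow_one_sub_mul {c y p : ℝ} (hc : 0 < c) (hy : 0 < y) :
    y ^ p = 2 ^ p * c ^ (1 - p) * ((c * (y / 2)) ^ (p - 1) * (y / 2)) := by
  have hy2 : 0 < y / 2 := by positivity
  rw [Real.mul_rpow hc.le hy2.le, Real.rpow_sub_one hy2.ne', Real.rpow_sub_one hc.ne',
    Real.rpow_sub hc, Real.rpow_one, Real.div_rpow hy.le zero_le_two]
  have : 0 < c ^ p := by positivity
  have : 0 < (2 : ℝ) ^ p := by positivity
  field_simp

theorem ENNReal.rpow_le_mul_of_forall_rpow_mul_sub_le {c p : ℝ} (hc : 0 < c) (hp : 1 < p)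
    {F J : ℝ≥0∞}
    (h : ∀ t : ℝ, 0 < t →
      ENNReal.ofReal (t ^ (c * (p - 1))) * (F - ENNReal.ofReal (t ^ c / c)) ≤ J) :
    F ^ p ≤ ENNReal.ofReal (2 ^ p * c ^ (1 - p)) * J := by
  rcases eq_or_ne F 0 with rfl | hF0
  · simp [ENNReal.zero_rpow_of_pos (by linarith : 0 < p)]
  rcases eq_or_ne F ⊤ with rfl | hFtop
  · have hJ := h 1 one_pos
    rw [ENNReal.top_sub ENNReal.ofReal_ne_top, Real.one_rpow, ENNReal.ofReal_one, one_mul,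
      top_le_iff] at hJ
    rw [hJ, ENNReal.mul_top (by positivity)]
    exact le_top
  obtain ⟨f, hf, rfl⟩ : ∃ f : ℝ, 0 < f ∧ ENNReal.ofReal f = F :=
    ⟨F.toReal, ENNReal.toReal_pos hF0 hFtop, ENNReal.ofReal_toReal hFtop⟩
  -- `t` is chosen so that `∫_0^t x^(c-1) dx = t^c / c` equals `f / 2`
  set t := (c * (f / 2)) ^ c⁻¹
  have htc : t ^ c = c * (f / 2) := Real.rpow_inv_rpow (by positivity) hc.ne'
  have hJ := h t (by positivity)
  rw [Real.rpow_mul (by positivity), htc, mul_div_cancel_left₀ _ hc.ne',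
    ← ENNReal.ofReal_sub _ (by positivity), _root_.sub_half] at hJ
  calc ENNReal.ofReal f ^ p = ENNReal.ofReal (f ^ p) := ENNReal.ofReal_rpow_of_pos hf
    _ = ENNReal.ofReal (2 ^ p * c ^ (1 - p)) *
          (ENNReal.ofReal ((c * (f / 2)) ^ (p - 1)) * ENNReal.ofReal (f / 2)) := by
        rw [← ENNReal.ofReal_mul (by positivity), ← ENNReal.ofReal_mul (by positivity),
          ← rpow_eq_two_rpow_mul_rpow_one_sub_mul hc hf]
    _ ≤ _ := by gcongr

theorem stmt0_general (a p : ℝ) (ha : -1 < a) (hp1 : 1 < p) (E : Set ℝ)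
    (hE' : E ⊆ Set.Ici 0) :
    (∫⁻ x in E, ENNReal.ofReal (x ^ a)) ^ p ≤
      ENNReal.ofReal (2 ^ p * (a + 1) ^ (1 - p)) *
        ∫⁻ x in E, ENNReal.ofReal (x ^ ((a + 1) * p - 1)) := by
  have ha1 : 0 < a + 1 := by linarith
  refine ENNReal.rpow_le_mul_of_forall_rpow_mul_sub_le ha1 hp1 fun t ht => ?_
  rw [show (a + 1) * p - 1 = (a + 1) * (p - 1) + a by ring]
  exact ofReal_rpow_mul_sub_le_setLIntegral_rpow_add ha (by nlinarith) ht hE'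

theorem stmt0 (a p : ℝ) (ha : -1 < a) (hp1 : 1 < p) (E : Set ℝ)
    (hE : MeasurableSet E) (hE' : E ⊆ Set.Ici 0) :
    (∫⁻ x in E, ENNReal.ofReal (x ^ a)) ^ p ≤
      ENNReal.ofReal (2 ^ p * (a + 1) ^ (1 - p)) *
        ∫⁻ x in E, ENNReal.ofReal (x ^ ((a + 1) * p - 1)) :=
  stmt0_general a p ha hp1 E hE'
end

section
/- Let ξ₀ > 0 and let r, s, t be real numbers with r < -1, r + t ≤ -1, and r + s + t ≤ -1. Then there is a constant C such that for every measurable f: (0,∞) → ℝ, ∫_1^∞ x^r · sup_{ξ₀ ≤ ξ ≤ x} ( ξ^s ∫_ξ^x y^t |f(y)| dy ) dx ≤ C ∫_0^∞ |f(x)| dx. -/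
open MeasureTheory Set

/-! Since `ξ ^ s ≤ ξ₀ ^ s + y ^ s` for `ξ₀ ≤ ξ ≤ y`, the supremum over `ξ` is dominated by the single
integral `∫_{ξ₀}^x (ξ₀ ^ s y ^ t + y ^ (s + t)) |f y| dy`. By Tonelli the `x`-integral then becomes
`∫_{ξ₀}^∞ (ξ₀ ^ s y ^ t + y ^ (s + t)) |f y| ∫_{max y 1}^∞ x ^ r dx dy`, and the inner integral
`max y 1 ^ (r + 1) / -(r + 1)` compensates the weight: `y ^ (t + r + 1)` and
`y ^ (s + t + r + 1)` are at most `1` for `y ≥ 1`, while for `ξ₀ < y < 1` the weights are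
bounded by their values at `ξ₀` or `1`. -/

lemma lintegral_Ioi_rpow_of_lt {r c : ℝ} (hr : r < -1) (hc : 0 < c) :
    ∫⁻ x in Ioi c, ENNReal.ofReal (x ^ r) = ENNReal.ofReal (c ^ (r + 1) / -(r + 1)) := by
  rw [← neg_div_neg_eq, neg_neg, ← integral_Ioi_rpow_of_lt hr hc,
    ofReal_integral_eq_lintegral_ofReal (integrableOn_Ioi_rpow_of_lt hr hc)]
  filter_upwards [ae_restrict_mem measurableSet_Ioi] with x hx
  exact Real.rpow_nonneg (hc.trans hx).le r

lemma rpow_le_rpow_add_rpow {c ξ y : ℝ} (s : ℝ) (hc : 0 < c) (hcξ : c ≤ ξ) (hξy : ξ ≤ y) :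
    ξ ^ s ≤ c ^ s + y ^ s := by
  have hξ : 0 < ξ := hc.trans_le hcξ
  rcases le_total 0 s with hs | hs
  · linarith [Real.rpow_le_rpow hξ.le hξy hs, Real.rpow_nonneg hc.le s]
  · linarith [Real.rpow_le_rpow_of_nonpos hc hcξ hs, Real.rpow_nonneg (hξ.trans_le hξy).le s]

lemma rpow_mul_max_one_rpow_le {c y a b : ℝ} (hc : 0 < c) (hcy : c ≤ y) (hab : a + b ≤ 0) :
    y ^ a * max y 1 ^ b ≤ max (c ^ a) 1 := by
  have hy : 0 < y := hc.trans_le hcy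
  rcases le_total 1 y with h1 | h1
  · rw [max_eq_left h1, ← Real.rpow_add hy]
    exact (Real.rpow_le_one_of_one_le_of_nonpos h1 hab).trans (le_max_right _ _)
  · rw [max_eq_right h1, Real.one_rpow, mul_one]
    rcases le_total 0 a with ha | ha
    · exact (Real.rpow_le_one hy.le h1 ha).trans (le_max_right _ _)
    · exact (Real.rpow_le_rpow_of_nonpos hc hcy ha).trans (le_max_left _ _)

lemma iSup_Icc_rpow_mul_lintegral_Ioc_le {c x : ℝ} (s : ℝ) (hc : 0 < c) (g : ℝ → ENNReal) :
    ⨆ ξ ∈ Icc c x, ENNReal.ofReal (ξ ^ s) * ∫⁻ y in Ioc ξ x, g y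
      ≤ ∫⁻ y in Ioc c x, ENNReal.ofReal (c ^ s + y ^ s) * g y := by
  refine iSup₂_le fun ξ hξ => ?_
  rw [← lintegral_const_mul' _ _ ENNReal.ofReal_ne_top]
  refine (setLIntegral_mono' measurableSet_Ioc fun y hy => ?_).trans
    (lintegral_mono_set (Ioc_subset_Ioc_left hξ.1))
  gcongr
  exact rpow_le_rpow_add_rpow s hc hξ.1 hy.1.le

lemma lintegral_Ioi_one_rpow_indicator_Ici_le {r : ℝ} (hr : r < -1) (y : ℝ) :
    ∫⁻ x in Ioi 1, (Ici y).indicator (fun x => ENNReal.ofReal (x ^ r)) x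
      ≤ ENNReal.ofReal (max y 1 ^ (r + 1) / -(r + 1)) := by
  rw [lintegral_indicator measurableSet_Ici, Measure.restrict_restrict measurableSet_Ici,
    ← lintegral_Ioi_rpow_of_lt hr (lt_max_of_lt_right one_pos),
    setLIntegral_congr (Ioi_ae_eq_Ici (a := max y 1))]
  exact lintegral_mono_set fun x hx => mem_Ici.2 (max_le hx.1 hx.2.le)

lemma lintegral_Ioi_rpow_mul_lintegral_Ioc_le {r : ℝ} (c : ℝ) (hr : r < -1) {g : ℝ → ENNReal}
    (hg : Measurable g) :
    ∫⁻ x in Ioi 1, ENNReal.ofReal (x ^ r) * ∫⁻ y in Ioc c x, g y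
      ≤ ∫⁻ y in Ioi c, ENNReal.ofReal (max y 1 ^ (r + 1) / -(r + 1)) * g y := by
  set F : ℝ × ℝ → ENNReal :=
    {p | p.2 ≤ p.1}.indicator fun p => ENNReal.ofReal (p.1 ^ r) * g p.2
  have hF : Measurable F :=
    (by fun_prop : Measurable _).indicator (measurableSet_le measurable_snd measurable_fst)
  have hF_x (x : ℝ) :
      ENNReal.ofReal (x ^ r) * ∫⁻ y in Ioc c x, g y = ∫⁻ y in Ioi c, F (x, y) := by
    rw [← lintegral_const_mul' _ _ ENNReal.ofReal_ne_top, ← Iic_inter_Ioi,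
      ← Measure.restrict_restrict measurableSet_Iic, ← lintegral_indicator measurableSet_Iic]
    rfl
  have hF_y (y : ℝ) :
      (fun x => F (x, y)) =
        fun x => (Ici y).indicator (fun x => ENNReal.ofReal (x ^ r)) x * g y := by
    ext x
    by_cases h : y ≤ x <;> simp [F, h]
  simp_rw [hF_x]
  rw [lintegral_lintegral_swap (f := fun x y => F (x, y)) hF.aemeasurable]
  refine lintegral_mono fun y => ?_
  rw [hF_y, lintegral_mul_const _ ((by fun_prop : Measurable _).indicator measurableSet_Ici)]
  exact mul_le_mul_left (lintegral_Ioi_one_rpow_indicator_Ici_le hr y) _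

lemma max_one_rpow_div_mul_le {c y r s t : ℝ} (hc : 0 < c) (hcy : c ≤ y) (hr : r < -1)
    (hrt : r + t ≤ -1) (hrst : r + s + t ≤ -1) :
    max y 1 ^ (r + 1) / -(r + 1) * ((c ^ s + y ^ s) * y ^ t)
      ≤ (c ^ s * max (c ^ t) 1 + max (c ^ (s + t)) 1) / -(r + 1) := by
  have hy : 0 < y := hc.trans_le hcy
  rw [div_mul_eq_mul_div]
  refine div_le_div_of_nonneg_right ?_ (by linarith)
  calc max y 1 ^ (r + 1) * ((c ^ s + y ^ s) * y ^ t)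
      = c ^ s * (y ^ t * max y 1 ^ (r + 1)) + y ^ (s + t) * max y 1 ^ (r + 1) := by
        rw [Real.rpow_add hy]; ring
    _ ≤ c ^ s * max (c ^ t) 1 + max (c ^ (s + t)) 1 := by
        gcongr
        · exact rpow_mul_max_one_rpow_le hc hcy (by linarith)
        · exact rpow_mul_max_one_rpow_le hc hcy (by linarith)

theorem stmt1 (ξ₀ r s t : ℝ) (hξ₀ : 0 < ξ₀) (hr : r < -1)
    (hrt : r + t ≤ -1) (hrst : r + s + t ≤ -1) :
    ∃ C : ℝ, 0 < C ∧ ∀ f : ℝ → ℝ, Measurable f →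
      ∫⁻ x in Set.Ioi (1 : ℝ),
          ENNReal.ofReal (x ^ r) *
            ⨆ ξ ∈ Set.Icc ξ₀ x,
              ENNReal.ofReal (ξ ^ s) *
                ∫⁻ y in Set.Ioc ξ x, ENNReal.ofReal (y ^ t * |f y|)
        ≤ ENNReal.ofReal C * ∫⁻ x in Set.Ioi (0 : ℝ), ENNReal.ofReal |f x| := by
  set C := (ξ₀ ^ s * max (ξ₀ ^ t) 1 + max (ξ₀ ^ (s + t)) 1) / -(r + 1)
  have hr₁ : 0 < -(r + 1) := by linarith
  have hC : 0 < C := div_pos (by positivity) hr₁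
  refine ⟨C, hC, fun f hf => ?_⟩
  calc _ ≤ ∫⁻ x in Ioi 1, ENNReal.ofReal (x ^ r) *
          ∫⁻ y in Ioc ξ₀ x, ENNReal.ofReal (ξ₀ ^ s + y ^ s) * ENNReal.ofReal (y ^ t * |f y|) := by
        gcongr with x
        exact iSup_Icc_rpow_mul_lintegral_Ioc_le s hξ₀ _
    _ ≤ ∫⁻ y in Ioi ξ₀, ENNReal.ofReal (max y 1 ^ (r + 1) / -(r + 1)) *
          (ENNReal.ofReal (ξ₀ ^ s + y ^ s) * ENNReal.ofReal (y ^ t * |f y|)) :=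
        lintegral_Ioi_rpow_mul_lintegral_Ioc_le ξ₀ hr (by fun_prop)
    _ ≤ ∫⁻ y in Ioi ξ₀, ENNReal.ofReal C * ENNReal.ofReal |f y| := by
        refine setLIntegral_mono' measurableSet_Ioi fun y (hy : ξ₀ < y) => ?_
        have hy₀ : 0 < y := hξ₀.trans hy
        rw [← ENNReal.ofReal_mul (by positivity), ← ENNReal.ofReal_mul (by positivity),
          ← ENNReal.ofReal_mul hC.le]
        refine ENNReal.ofReal_le_ofReal ?_
        calc _ = max y 1 ^ (r + 1) / -(r + 1) * ((ξ₀ ^ s + y ^ s) * y ^ t) * |f y| := by ring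
          _ ≤ C * |f y| := by
            gcongr
            exact max_one_rpow_div_mul_le hξ₀ hy.le hr hrt hrst
    _ ≤ ∫⁻ y in Ioi 0, ENNReal.ofReal C * ENNReal.ofReal |f y| :=
        lintegral_mono_set (Ioi_subset_Ioi hξ₀.le)
    _ = _ := lintegral_const_mul' _ _ ENNReal.ofReal_ne_top
end

section
/- Let t, r, s be real numbers with t ≤ 0, r + t ≤ -1, and r + s + t ≤ -1, with strict inequality in the last two in case of equality in the first. Then for any ξ₀ > 0 there is a constant C such that for every measurable f: (0,∞) → ℝ, ∫_1^∞ x^r · sup_{ξ₀ ≤ ξ ≤ x} ( ξ^s ∫_x^∞ y^t |f(y)| dy ) dx ≤ C ∫_0^∞ |f(x)| dx. -/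
/-!
For `ξ ∈ [ξ₀, x]` one has `ξ ^ s ≤ ξ₀ ^ s + x ^ s`, so the supremum is dominated by the tail
integral `∫_x^∞ y ^ t |f y| dy` against the weight `w x = ξ₀ ^ s x ^ r + x ^ (r + s)`. By Tonelli,
`∫_1^∞ w x ∫_x^∞ g y dy dx = ∫_1^∞ (∫_1^y w) g y dy`, and it remains to see that
`∫_1^y x ^ a dx ≤ K y ^ (-t)` for `a ∈ {r, r + s}`: for `t < 0` compare with `x ^ (-t - 1)`,
and for `t = 0` the hypothesis `a < -1` makes `x ^ a` integrable on `(1, ∞)`.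
-/

open MeasureTheory Set

theorem lintegral_Ioo_ofReal_rpow {a c y : ℝ} (hc : 0 < c) (hcy : c ≤ y) :
    ∫⁻ x in Ioo c y, ENNReal.ofReal (x ^ a) = ENNReal.ofReal (∫ x in c..y, x ^ a) := by
  have hint : IntegrableOn (fun x : ℝ => x ^ a) (Ioo c y) :=
    (ContinuousOn.integrableOn_Icc fun x hx =>
      (Real.continuousAt_rpow_const x a (Or.inl (hc.trans_le hx.1).ne')).continuousWithinAt
      ).mono_set Ioo_subset_Icc_self
  rw [intervalIntegral.integral_of_le hcy, integral_Ioc_eq_integral_Ioo,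
    ofReal_integral_eq_lintegral_ofReal hint]
  exact (ae_restrict_iff' measurableSet_Ioo).2 (.of_forall fun x hx =>
    Real.rpow_nonneg (hc.trans hx.1).le a)

theorem lintegral_Ioo_one_rpow_le_of_neg {a t y : ℝ} (ht : t < 0) (hat : a + t ≤ -1)
    (hy : 1 ≤ y) :
    ∫⁻ x in Ioo 1 y, ENNReal.ofReal (x ^ a) ≤ ENNReal.ofReal (y ^ (-t) / -t) := by
  calc ∫⁻ x in Ioo 1 y, ENNReal.ofReal (x ^ a)
      ≤ ∫⁻ x in Ioo 1 y, ENNReal.ofReal (x ^ (-t - 1)) :=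
        setLIntegral_mono' measurableSet_Ioo fun x hx => ENNReal.ofReal_le_ofReal
          (Real.rpow_le_rpow_of_exponent_le hx.1.le (by linarith))
    _ = ENNReal.ofReal ((y ^ (-t) - 1) / -t) := by
        rw [lintegral_Ioo_ofReal_rpow one_pos hy, integral_rpow (Or.inl (by linarith))]
        norm_num
    _ ≤ ENNReal.ofReal (y ^ (-t) / -t) := by
        gcongr <;> linarith

theorem lintegral_Ioo_one_rpow_le_of_lt_neg_one {a : ℝ} (ha : a < -1) (y : ℝ) :
    ∫⁻ x in Ioo 1 y, ENNReal.ofReal (x ^ a) ≤ ENNReal.ofReal (-1 / (a + 1)) := by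
  calc ∫⁻ x in Ioo 1 y, ENNReal.ofReal (x ^ a)
      ≤ ∫⁻ x in Ioi 1, ENNReal.ofReal (x ^ a) := lintegral_mono_set Ioo_subset_Ioi_self
    _ = ENNReal.ofReal (-1 / (a + 1)) := by
        rw [← ofReal_integral_eq_lintegral_ofReal (integrableOn_Ioi_rpow_of_lt ha one_pos),
          integral_Ioi_rpow_of_lt ha one_pos, Real.one_rpow]
        exact (ae_restrict_iff' measurableSet_Ioi).2 (.of_forall fun x hx =>
          Real.rpow_nonneg (zero_le_one.trans hx.le) a)

theorem exists_lintegral_Ioo_one_rpow_le {a t : ℝ} (ht : t ≤ 0) (hat : a + t ≤ -1)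
    (hstrict : t = 0 → a + t < -1) :
    ∃ K : ℝ, 0 < K ∧ ∀ y, 1 < y →
      ∫⁻ x in Ioo 1 y, ENNReal.ofReal (x ^ a) ≤ ENNReal.ofReal (K * y ^ (-t)) := by
  rcases ht.lt_or_eq with ht | rfl
  · refine ⟨1 / -t, by simpa using ht, fun y hy => ?_⟩
    simpa [div_eq_inv_mul] using lintegral_Ioo_one_rpow_le_of_neg ht hat hy.le
  · have ha : a < -1 := by simpa using hstrict rfl
    refine ⟨-1 / (a + 1), div_pos_of_neg_of_neg (by norm_num) (by linarith), fun y _ => ?_⟩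
    simpa using lintegral_Ioo_one_rpow_le_of_lt_neg_one ha y

theorem lintegral_Ioi_mul_lintegral_Ioi {μ : Measure ℝ} [SFinite μ] {w g : ℝ → ENNReal}
    (hw : Measurable w) (hg : Measurable g) (a : ℝ) :
    ∫⁻ x in Ioi a, w x * ∫⁻ y in Ioi x, g y ∂μ ∂μ
      = ∫⁻ y in Ioi a, (∫⁻ x in Ioo a y, w x ∂μ) * g y ∂μ := by
  set F : ℝ → ℝ → ENNReal := fun x y => {p : ℝ × ℝ | p.1 < p.2}.indicator
    (fun p => w p.1 * g p.2) (x, y)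
  have hF : Measurable (Function.uncurry F) :=
    ((hw.comp measurable_fst).mul (hg.comp measurable_snd)).indicator
      (measurableSet_lt measurable_fst measurable_snd)
  calc ∫⁻ x in Ioi a, w x * ∫⁻ y in Ioi x, g y ∂μ ∂μ
      = ∫⁻ x in Ioi a, ∫⁻ y in Ioi a, F x y ∂μ ∂μ := by
        refine setLIntegral_congr_fun measurableSet_Ioi fun x hx => ?_
        have : F x = (Ioi x).indicator fun y => w x * g y := by
          ext y; simp [F, indicator_apply]
        rw [this, lintegral_indicator measurableSet_Ioi, Measure.restrict_restrict measurableSet_Ioi,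
          inter_eq_left.2 (Ioi_subset_Ioi hx.le), lintegral_const_mul _ hg]
    _ = ∫⁻ y in Ioi a, ∫⁻ x in Ioi a, F x y ∂μ ∂μ := lintegral_lintegral_swap hF.aemeasurable
    _ = ∫⁻ y in Ioi a, (∫⁻ x in Ioo a y, w x ∂μ) * g y ∂μ := by
        refine setLIntegral_congr_fun measurableSet_Ioi fun y _ => ?_
        have : (F · y) = (Iio y).indicator fun x => w x * g y := by
          ext x; simp [F, indicator_apply]
        rw [this, lintegral_indicator measurableSet_Iio, Measure.restrict_restrict measurableSet_Iio,
          Iio_inter_Ioi, lintegral_mul_const _ hw]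

theorem lintegral_mul_lintegral_Ioi_rpow_mul_abs_le {w : ℝ → ENNReal} (hw : Measurable w)
    {K t : ℝ} (hK : 0 ≤ K) (hwK : ∀ y, 1 < y → ∫⁻ x in Ioo 1 y, w x ≤ ENNReal.ofReal (K * y ^ (-t)))
    {f : ℝ → ℝ} (hf : Measurable f) :
    ∫⁻ x in Ioi 1, w x * ∫⁻ y in Ioi x, ENNReal.ofReal (y ^ t * |f y|)
      ≤ ENNReal.ofReal K * ∫⁻ x in Ioi 0, ENNReal.ofReal |f x| := by
  rw [lintegral_Ioi_mul_lintegral_Ioi hw (by fun_prop)]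
  calc ∫⁻ y in Ioi 1, (∫⁻ x in Ioo 1 y, w x) * ENNReal.ofReal (y ^ t * |f y|)
      ≤ ∫⁻ y in Ioi 1, ENNReal.ofReal K * ENNReal.ofReal |f y| := by
        refine setLIntegral_mono' measurableSet_Ioi fun y (hy : 1 < y) => ?_
        have hy₀ : 0 < y := zero_lt_one.trans hy
        calc (∫⁻ x in Ioo 1 y, w x) * ENNReal.ofReal (y ^ t * |f y|)
            ≤ ENNReal.ofReal (K * y ^ (-t)) * ENNReal.ofReal (y ^ t * |f y|) := by
              gcongr; exact hwK y hy
          _ = ENNReal.ofReal K * ENNReal.ofReal |f y| := by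
              rw [← ENNReal.ofReal_mul (by positivity), ← ENNReal.ofReal_mul hK,
                Real.rpow_neg hy₀.le]
              field_simp
    _ = ENNReal.ofReal K * ∫⁻ y in Ioi 1, ENNReal.ofReal |f y| :=
        lintegral_const_mul' _ _ ENNReal.ofReal_ne_top
    _ ≤ ENNReal.ofReal K * ∫⁻ x in Ioi 0, ENNReal.ofReal |f x| := by
        gcongr; exact zero_le_one

theorem rpow_le_rpow_add_rpow_of_mem_Icc {a b ξ : ℝ} (ha : 0 < a) (hξ : ξ ∈ Icc a b) (s : ℝ) :
    ξ ^ s ≤ a ^ s + b ^ s := by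
  have hξ₀ : 0 < ξ := ha.trans_le hξ.1
  rcases le_or_gt 0 s with hs | hs
  · linarith [Real.rpow_le_rpow hξ₀.le hξ.2 hs, Real.rpow_nonneg ha.le s]
  · linarith [Real.rpow_le_rpow_of_nonpos ha hξ.1 hs.le, Real.rpow_nonneg (hξ₀.trans_le hξ.2).le s]

theorem ofReal_rpow_mul_iSup_Icc_le {a x : ℝ} (ha : 0 < a) (hx : 0 < x) (r s : ℝ) (c : ENNReal) :
    ENNReal.ofReal (x ^ r) * ⨆ ξ ∈ Icc a x, ENNReal.ofReal (ξ ^ s) * c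
      ≤ (ENNReal.ofReal (a ^ s) * ENNReal.ofReal (x ^ r) + ENNReal.ofReal (x ^ (r + s))) * c := by
  calc _ ≤ ENNReal.ofReal (x ^ r) * (ENNReal.ofReal (a ^ s + x ^ s) * c) := by
        gcongr
        exact iSup₂_le fun ξ hξ => by gcongr; exact rpow_le_rpow_add_rpow_of_mem_Icc ha hξ s
    _ = _ := by
        rw [← mul_assoc, ← ENNReal.ofReal_mul (by positivity), Real.rpow_add hx,
          ← ENNReal.ofReal_mul (by positivity), ← ENNReal.ofReal_add (by positivity) (by positivity)]
        ring_nf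

theorem stmt3 (t r s : ℝ) (ht : t ≤ 0) (hrt : r + t ≤ -1)
    (hrst : r + s + t ≤ -1)
    (hstrict : t = 0 → r + t < -1 ∧ r + s + t < -1)
    (ξ₀ : ℝ) (hξ₀ : 0 < ξ₀) :
    ∃ C : ℝ, 0 < C ∧ ∀ f : ℝ → ℝ, Measurable f →
      ∫⁻ x in Set.Ioi (1 : ℝ),
          ENNReal.ofReal (x ^ r) *
            ⨆ ξ ∈ Set.Icc ξ₀ x,
              ENNReal.ofReal (ξ ^ s) *
                ∫⁻ y in Set.Ioi x, ENNReal.ofReal (y ^ t * |f y|)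
        ≤ ENNReal.ofReal C * ∫⁻ x in Set.Ioi (0 : ℝ), ENNReal.ofReal |f x| := by
  obtain ⟨K₁, hK₁, hr⟩ := exists_lintegral_Ioo_one_rpow_le ht hrt fun h => (hstrict h).1
  obtain ⟨K₂, hK₂, hrs⟩ := exists_lintegral_Ioo_one_rpow_le ht hrst fun h => (hstrict h).2
  have hξ₀s : 0 ≤ ξ₀ ^ s := Real.rpow_nonneg hξ₀.le s
  have hw : ∀ y, 1 < y → ∫⁻ x in Ioo 1 y, (ENNReal.ofReal (ξ₀ ^ s) * ENNReal.ofReal (x ^ r)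
      + ENNReal.ofReal (x ^ (r + s))) ≤ ENNReal.ofReal ((ξ₀ ^ s * K₁ + K₂) * y ^ (-t)) := by
    intro y hy
    rw [lintegral_add_left (by fun_prop), lintegral_const_mul' _ _ ENNReal.ofReal_ne_top]
    calc _ ≤ ENNReal.ofReal (ξ₀ ^ s) * ENNReal.ofReal (K₁ * y ^ (-t))
          + ENNReal.ofReal (K₂ * y ^ (-t)) := by gcongr; exacts [hr y hy, hrs y hy]
      _ = _ := by
        rw [← ENNReal.ofReal_mul hξ₀s, ← ENNReal.ofReal_add (by positivity) (by positivity)]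
        ring_nf
  refine ⟨ξ₀ ^ s * K₁ + K₂, by positivity, fun f hf => ?_⟩
  exact le_trans (setLIntegral_mono' measurableSet_Ioi fun x (hx : 1 < x) =>
      ofReal_rpow_mul_iSup_Icc_le hξ₀ (zero_lt_one.trans hx) r s _)
    (lintegral_mul_lintegral_Ioi_rpow_mul_abs_le (by fun_prop) (by positivity) hw hf)
end

section
/- Let s < 0, s + t ≤ 0, and r + s + t ≤ -1, with equality holding in at most one of the last two inequalities. Then there is a constant C such that for every measurable f: (0,∞) → ℝ, ∫_1^∞ x^r · sup_{ξ ≥ x} ( ξ^s ∫_x^ξ y^t |f(y)| dy ) dx ≤ C ∫_0^∞ |f(x)| dx. -/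
/-!
Since `s ≤ 0`, the factor `ξ ^ s` can be moved inside the integral as `y ^ s ≥ ξ ^ s`, so the
supremum is at most `∫_{y > x} y ^ (s + t) |f y| dy`. Tonelli's theorem then bounds the left-hand
side by `∫_{y > 1} (∫_1^y x ^ r dx) y ^ (s + t) |f y| dy`, and `(∫_1^y x ^ r dx) y ^ (s + t)` is
bounded in `y > 1`: if `s + t = 0` then `r < -1` and `∫_1^∞ x ^ r dx` is finite; if `s + t < 0`
then `x ^ r ≤ x ^ (-1 - (s + t))` on `x ≥ 1`, whose integral over `(0, y)` is a multiple of
`y ^ (-(s + t))`.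
-/

open MeasureTheory Set ENNReal

lemma lintegral_Ioi_one_rpow {r : ℝ} (hr : r < -1) :
    ∫⁻ x in Ioi (1 : ℝ), ENNReal.ofReal (x ^ r) = ENNReal.ofReal (-1 / (r + 1)) := by
  rw [← ofReal_integral_eq_lintegral_ofReal (integrableOn_Ioi_rpow_of_lt hr one_pos),
    integral_Ioi_rpow_of_lt hr one_pos, Real.one_rpow]
  filter_upwards [ae_restrict_mem measurableSet_Ioi] with x hx
  exact Real.rpow_nonneg (zero_le_one.trans (le_of_lt hx)) r

lemma lintegral_Ioc_zero_rpow {r y : ℝ} (hr : -1 < r) (hy : 0 ≤ y) :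
    ∫⁻ x in Ioc 0 y, ENNReal.ofReal (x ^ r) = ENNReal.ofReal (y ^ (r + 1) / (r + 1)) := by
  rw [← ofReal_integral_eq_lintegral_ofReal, ← intervalIntegral.integral_of_le hy,
    integral_rpow (Or.inl hr), Real.zero_rpow (by linarith : r + 1 ≠ 0), sub_zero]
  · exact (intervalIntegrable_iff_integrableOn_Ioc_of_le hy).mp
      (intervalIntegral.intervalIntegrable_rpow' hr)
  · filter_upwards [ae_restrict_mem measurableSet_Ioc] with x hx
    exact Real.rpow_nonneg hx.1.le r

lemma exists_lintegral_Ioo_one_rpow_mul_rpow_le {r q : ℝ} (hq : q ≤ 0) (hrq : r + q ≤ -1)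
    (hne : ¬ (q = 0 ∧ r + q = -1)) :
    ∃ K : ℝ, 0 < K ∧ ∀ y : ℝ, 1 < y →
      (∫⁻ x in Ioo 1 y, ENNReal.ofReal (x ^ r)) * ENNReal.ofReal (y ^ q) ≤ ENNReal.ofReal K := by
  rcases hq.eq_or_lt with rfl | hq
  · have hr : r < -1 := by
      rw [add_zero] at hrq hne
      exact hrq.lt_of_ne fun h => hne ⟨rfl, h⟩
    refine ⟨-1 / (r + 1), div_pos_of_neg_of_neg (by norm_num) (by linarith), fun y _ => ?_⟩
    rw [Real.rpow_zero, ENNReal.ofReal_one, mul_one, ← lintegral_Ioi_one_rpow hr]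
    exact lintegral_mono_set Ioo_subset_Ioi_self
  · set r' := -1 - q
    have hr' : 0 < r' + 1 := by linarith
    refine ⟨1 / (r' + 1), by positivity, fun y hy => ?_⟩
    have hy0 : 0 < y := zero_lt_one.trans hy
    have hint : ∫⁻ x in Ioo 1 y, ENNReal.ofReal (x ^ r)
        ≤ ENNReal.ofReal (y ^ (r' + 1) / (r' + 1)) :=
      calc ∫⁻ x in Ioo 1 y, ENNReal.ofReal (x ^ r)
          ≤ ∫⁻ x in Ioo 1 y, ENNReal.ofReal (x ^ r') :=
            setLIntegral_mono' measurableSet_Ioo fun x hx =>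
              ENNReal.ofReal_le_ofReal (Real.rpow_le_rpow_of_exponent_le hx.1.le (by linarith))
        _ ≤ ∫⁻ x in Ioc 0 y, ENNReal.ofReal (x ^ r') :=
            lintegral_mono_set fun x hx => ⟨zero_lt_one.trans hx.1, hx.2.le⟩
        _ = ENNReal.ofReal (y ^ (r' + 1) / (r' + 1)) := lintegral_Ioc_zero_rpow (by linarith) hy0.le
    calc (∫⁻ x in Ioo 1 y, ENNReal.ofReal (x ^ r)) * ENNReal.ofReal (y ^ q)
        ≤ ENNReal.ofReal (y ^ (r' + 1) / (r' + 1)) * ENNReal.ofReal (y ^ q) :=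
          mul_le_mul_left hint _
      _ = ENNReal.ofReal (1 / (r' + 1)) := by
          rw [← ENNReal.ofReal_mul (by positivity), div_mul_eq_mul_div, ← Real.rpow_add hy0,
            show r' + 1 + q = 0 by ring, Real.rpow_zero]

lemma iSup_rpow_mul_setLIntegral_Ioc_le {s t x : ℝ} (hs : s ≤ 0) (hx : 0 ≤ x) (f : ℝ → ℝ) :
    ⨆ ξ ∈ Ici x, ENNReal.ofReal (ξ ^ s) * ∫⁻ y in Ioc x ξ, ENNReal.ofReal (y ^ t * |f y|)
      ≤ ∫⁻ y in Ioi x, ENNReal.ofReal (y ^ (s + t) * |f y|) := by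
  refine iSup₂_le fun ξ hξ => ?_
  calc ENNReal.ofReal (ξ ^ s) * ∫⁻ y in Ioc x ξ, ENNReal.ofReal (y ^ t * |f y|)
      = ∫⁻ y in Ioc x ξ, ENNReal.ofReal (ξ ^ s * (y ^ t * |f y|)) := by
        rw [← lintegral_const_mul' _ _ ENNReal.ofReal_ne_top]
        refine setLIntegral_congr_fun measurableSet_Ioc fun y _ => ?_
        rw [ENNReal.ofReal_mul (Real.rpow_nonneg (hx.trans hξ) s)]
    _ ≤ ∫⁻ y in Ioc x ξ, ENNReal.ofReal (y ^ (s + t) * |f y|) := by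
        refine setLIntegral_mono' measurableSet_Ioc fun y hy => ENNReal.ofReal_le_ofReal ?_
        have hy0 : 0 < y := hx.trans_lt hy.1
        rw [Real.rpow_add hy0, mul_assoc]
        exact mul_le_mul_of_nonneg_right (Real.rpow_le_rpow_of_nonpos hy0 hy.2 hs) (by positivity)
    _ ≤ ∫⁻ y in Ioi x, ENNReal.ofReal (y ^ (s + t) * |f y|) :=
        lintegral_mono_set Ioc_subset_Ioi_self

lemma setLIntegral_Ioi_mul_setLIntegral_Ioi {μ : Measure ℝ} [SFinite μ] {w g : ℝ → ℝ≥0∞}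
    (hw : Measurable w) (hg : Measurable g) (a : ℝ) :
    ∫⁻ x in Ioi a, w x * ∫⁻ y in Ioi x, g y ∂μ ∂μ
      = ∫⁻ y in Ioi a, (∫⁻ x in Ioo a y, w x ∂μ) * g y ∂μ := by
  set F : ℝ × ℝ → ℝ≥0∞ := {q : ℝ × ℝ | q.1 < q.2}.indicator (fun q => w q.1 * g q.2)
  have hF : Measurable F :=
    ((hw.comp measurable_fst).mul (hg.comp measurable_snd)).indicator
      (measurableSet_lt measurable_fst measurable_snd)
  have hFx (x : ℝ) : (fun y => F (x, y)) = (Ioi x).indicator fun y => w x * g y := by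
    ext y; simp [F, indicator]
  have hFy (y : ℝ) : (fun x => F (x, y)) = (Iio y).indicator fun x => w x * g y := by
    ext x; simp [F, indicator]
  calc ∫⁻ x in Ioi a, w x * ∫⁻ y in Ioi x, g y ∂μ ∂μ
      = ∫⁻ x in Ioi a, ∫⁻ y in Ioi a, F (x, y) ∂μ ∂μ := by
        refine setLIntegral_congr_fun measurableSet_Ioi fun x hx => ?_
        rw [hFx, lintegral_indicator measurableSet_Ioi, Measure.restrict_restrict measurableSet_Ioi,
          Ioi_inter_Ioi, max_eq_left (le_of_lt hx), lintegral_const_mul _ hg]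
    _ = ∫⁻ y in Ioi a, ∫⁻ x in Ioi a, F (x, y) ∂μ ∂μ := lintegral_lintegral_swap hF.aemeasurable
    _ = ∫⁻ y in Ioi a, (∫⁻ x in Ioo a y, w x ∂μ) * g y ∂μ := by
        refine setLIntegral_congr_fun measurableSet_Ioi fun y _ => ?_
        rw [hFy, lintegral_indicator measurableSet_Iio, Measure.restrict_restrict measurableSet_Iio,
          Iio_inter_Ioi, lintegral_mul_const _ hw]

theorem stmt4 (r s t : ℝ) (hs : s < 0) (hst : s + t ≤ 0)
    (hrst : r + s + t ≤ -1) (hone : ¬ (s + t = 0 ∧ r + s + t = -1)) :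
    ∃ C : ℝ, 0 < C ∧ ∀ f : ℝ → ℝ, Measurable f →
      ∫⁻ x in Set.Ioi (1 : ℝ),
          ENNReal.ofReal (x ^ r) *
            ⨆ ξ ∈ Set.Ici x,
              ENNReal.ofReal (ξ ^ s) *
                ∫⁻ y in Set.Ioc x ξ, ENNReal.ofReal (y ^ t * |f y|)
        ≤ ENNReal.ofReal C * ∫⁻ x in Set.Ioi (0 : ℝ), ENNReal.ofReal |f x| := by
  rw [add_assoc] at hrst hone
  obtain ⟨K, hK, hKy⟩ := exists_lintegral_Ioo_one_rpow_mul_rpow_le hst hrst hone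
  refine ⟨K, hK, fun f hf => ?_⟩
  calc _ ≤ ∫⁻ x in Ioi 1, ENNReal.ofReal (x ^ r) *
          ∫⁻ y in Ioi x, ENNReal.ofReal (y ^ (s + t) * |f y|) :=
        setLIntegral_mono' measurableSet_Ioi fun x hx => mul_le_mul_right
          (iSup_rpow_mul_setLIntegral_Ioc_le hs.le (zero_le_one.trans (le_of_lt hx)) f) _
    _ = ∫⁻ y in Ioi 1, (∫⁻ x in Ioo 1 y, ENNReal.ofReal (x ^ r)) *
          (ENNReal.ofReal (y ^ (s + t)) * ENNReal.ofReal |f y|) := by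
        rw [setLIntegral_Ioi_mul_setLIntegral_Ioi (by fun_prop) (by fun_prop)]
        refine setLIntegral_congr_fun measurableSet_Ioi fun y hy => ?_
        rw [ENNReal.ofReal_mul (Real.rpow_nonneg (zero_le_one.trans (le_of_lt hy)) _)]
    _ ≤ ∫⁻ y in Ioi 1, ENNReal.ofReal K * ENNReal.ofReal |f y| :=
        setLIntegral_mono' measurableSet_Ioi fun y hy => by
          rw [← mul_assoc]
          exact mul_le_mul_left (hKy y hy) _
    _ ≤ ENNReal.ofReal K * ∫⁻ x in Ioi 0, ENNReal.ofReal |f x| := by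
        rw [lintegral_const_mul' _ _ ENNReal.ofReal_ne_top]
        exact mul_le_mul_right (lintegral_mono_set (Ioi_subset_Ioi zero_le_one)) _
end

section
/- Let r < -1, r + s < -1, and r + s + t ≤ -1. Then there is a constant C such that for every measurable f: (0,∞) → ℝ, ∫_1^∞ x^r · sup_{1 ≤ ξ ≤ x} ( ξ^s ∫_1^ξ y^t |f(y)| dy ) dx ≤ C ∫_0^∞ |f(x)| dx. -/
/-!
For `s ≥ 0` both factors under the supremum increase with `ξ`, so the supremum is at most
`x^s ∫_1^x y^t |f|`; for `s ≤ 0` one has `ξ^s ≤ y^s` inside the integral, so it is at most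
`∫_1^x y^(s+t) |f|`. Either way it remains to bound `∫_1^∞ x^ρ ∫_1^x y^τ |f y| dy dx` with
`ρ < -1` and `ρ + τ ≤ -1`. By Tonelli this is `∫_1^∞ y^(ρ+1+τ) |f y| dy / (-ρ-1)`, and
`y^(ρ+1+τ) ≤ 1` for `y ≥ 1`.
-/

open MeasureTheory Set
open scoped ENNReal

lemma lintegral_Ici_rpow_of_lt {y ρ : ℝ} (hy : 0 < y) (hρ : ρ < -1) :
    ∫⁻ x in Ici y, ENNReal.ofReal (x ^ ρ) = ENNReal.ofReal (y ^ (ρ + 1) / (-ρ - 1)) := by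
  have hnonneg : ∀ᵐ x ∂volume.restrict (Ioi y), 0 ≤ x ^ ρ :=
    (ae_restrict_iff' measurableSet_Ioi).2
      (.of_forall fun x hx => Real.rpow_nonneg (hy.trans hx).le ρ)
  rw [← setLIntegral_congr Ioi_ae_eq_Ici,
    ← ofReal_integral_eq_lintegral_ofReal (integrableOn_Ioi_rpow_of_lt hρ hy) hnonneg,
    integral_Ioi_rpow_of_lt hρ hy, neg_div, ← div_neg, neg_add']

lemma lintegral_Ioi_rpow_mul_lintegral_Ioc {a ρ : ℝ} (ha : 0 < a) (hρ : ρ < -1)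
    {g : ℝ → ℝ≥0∞} (hg : Measurable g) :
    ∫⁻ x in Ioi a, ENNReal.ofReal (x ^ ρ) * ∫⁻ y in Ioc a x, g y
      = ∫⁻ y in Ioi a, ENNReal.ofReal (y ^ (ρ + 1) / (-ρ - 1)) * g y := by
  set F : ℝ → ℝ → ℝ≥0∞ := fun x y =>
    {p : ℝ × ℝ | p.2 ≤ p.1}.indicator (fun p => ENNReal.ofReal (p.1 ^ ρ) * g p.2) (x, y)
  have hF : Measurable (Function.uncurry F) :=
    (((measurable_fst.pow_const ρ).ennreal_ofReal).mul (hg.comp measurable_snd)).indicator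
      (measurableSet_le measurable_snd measurable_fst)
  calc ∫⁻ x in Ioi a, ENNReal.ofReal (x ^ ρ) * ∫⁻ y in Ioc a x, g y
      = ∫⁻ x in Ioi a, ∫⁻ y in Ioi a, F x y := by
        refine lintegral_congr fun x => ?_
        have hFx : F x = (Iic x).indicator (fun y => ENNReal.ofReal (x ^ ρ) * g y) := rfl
        rw [hFx, lintegral_indicator measurableSet_Iic, Measure.restrict_restrict measurableSet_Iic,
          Iic_inter_Ioi, lintegral_const_mul' _ _ ENNReal.ofReal_ne_top]
    _ = ∫⁻ y in Ioi a, ∫⁻ x in Ioi a, F x y := lintegral_lintegral_swap hF.aemeasurable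
    _ = _ := by
        refine setLIntegral_congr_fun measurableSet_Ioi fun y hy => ?_
        have hFy : (F · y) = (Ici y).indicator (fun x => ENNReal.ofReal (x ^ ρ) * g y) := rfl
        rw [hFy, lintegral_indicator measurableSet_Ici, Measure.restrict_restrict measurableSet_Ici,
          inter_eq_left.2 (Ici_subset_Ioi.2 hy),
          lintegral_mul_const _ (by fun_prop),
          lintegral_Ici_rpow_of_lt (ha.trans hy) hρ]

lemma lintegral_Ioi_rpow_mul_lintegral_Ioc_le_s8 {ρ τ : ℝ} (hρ : ρ < -1) (hρτ : ρ + τ ≤ -1)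
    {f : ℝ → ℝ} (hf : Measurable f) :
    ∫⁻ x in Ioi 1, ENNReal.ofReal (x ^ ρ) * ∫⁻ y in Ioc 1 x, ENNReal.ofReal (y ^ τ * |f y|)
      ≤ ENNReal.ofReal (1 / (-ρ - 1)) * ∫⁻ y in Ioi 1, ENNReal.ofReal |f y| := by
  have hρ' : 0 < -ρ - 1 := by linarith
  rw [lintegral_Ioi_rpow_mul_lintegral_Ioc one_pos hρ (by fun_prop),
    ← lintegral_const_mul' _ _ ENNReal.ofReal_ne_top]
  refine setLIntegral_mono' measurableSet_Ioi fun y (hy : 1 < y) => ?_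
  have hy0 : 0 < y := one_pos.trans hy
  have hpow : y ^ (ρ + 1) * y ^ τ ≤ 1 := by
    rw [← Real.rpow_add hy0]
    exact Real.rpow_le_one_of_one_le_of_nonpos hy.le (by linarith)
  rw [← ENNReal.ofReal_mul (div_nonneg (Real.rpow_nonneg hy0.le _) hρ'.le),
    ← ENNReal.ofReal_mul (by positivity)]
  refine ENNReal.ofReal_le_ofReal ?_
  calc y ^ (ρ + 1) / (-ρ - 1) * (y ^ τ * |f y|)
      = (y ^ (ρ + 1) * y ^ τ) * (1 / (-ρ - 1) * |f y|) := by ring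
    _ ≤ 1 / (-ρ - 1) * |f y| := mul_le_of_le_one_left (by positivity) hpow

lemma iSup_rpow_mul_lintegral_Ioc_le_of_nonneg {s x : ℝ} (hs : 0 ≤ s) (g : ℝ → ℝ≥0∞) :
    ⨆ ξ ∈ Icc 1 x, ENNReal.ofReal (ξ ^ s) * ∫⁻ y in Ioc 1 ξ, g y
      ≤ ENNReal.ofReal (x ^ s) * ∫⁻ y in Ioc 1 x, g y :=
  iSup₂_le fun _ hξ => mul_le_mul'
    (ENNReal.ofReal_le_ofReal (Real.rpow_le_rpow (zero_le_one.trans hξ.1) hξ.2 hs))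
    (lintegral_mono_set (Ioc_subset_Ioc_right hξ.2))

lemma iSup_rpow_mul_lintegral_Ioc_le_of_nonpos {s t x : ℝ} (hs : s ≤ 0) (f : ℝ → ℝ) :
    ⨆ ξ ∈ Icc 1 x, ENNReal.ofReal (ξ ^ s) * ∫⁻ y in Ioc 1 ξ, ENNReal.ofReal (y ^ t * |f y|)
      ≤ ∫⁻ y in Ioc 1 x, ENNReal.ofReal (y ^ (s + t) * |f y|) := by
  refine iSup₂_le fun ξ hξ => ?_
  rw [← lintegral_const_mul' _ _ ENNReal.ofReal_ne_top]
  refine (setLIntegral_mono' measurableSet_Ioc fun y hy => ?_).trans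
    (lintegral_mono_set (Ioc_subset_Ioc_right hξ.2))
  have hy0 : 0 < y := one_pos.trans hy.1
  rw [← ENNReal.ofReal_mul (Real.rpow_nonneg (zero_le_one.trans hξ.1) s), Real.rpow_add hy0,
    mul_assoc]
  exact ENNReal.ofReal_le_ofReal
    (mul_le_mul_of_nonneg_right (Real.rpow_le_rpow_of_nonpos hy0 hy.2 hs) (by positivity))

theorem stmt8 (r s t : ℝ) (hr : r < -1) (hrs : r + s < -1)
    (hrst : r + s + t ≤ -1) :
    ∃ C : ℝ, 0 < C ∧ ∀ f : ℝ → ℝ, Measurable f →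
      ∫⁻ x in Set.Ioi (1 : ℝ),
          ENNReal.ofReal (x ^ r) *
            ⨆ ξ ∈ Set.Icc (1 : ℝ) x,
              ENNReal.ofReal (ξ ^ s) *
                ∫⁻ y in Set.Ioc (1 : ℝ) ξ, ENNReal.ofReal (y ^ t * |f y|)
        ≤ ENNReal.ofReal C * ∫⁻ x in Set.Ioi (0 : ℝ), ENNReal.ofReal |f x| := by
  obtain ⟨ρ, τ, hρ, hρτ, hsup⟩ : ∃ ρ τ : ℝ, ρ < -1 ∧ ρ + τ ≤ -1 ∧ ∀ f : ℝ → ℝ, ∀ x ∈ Ioi (1 : ℝ),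
      ENNReal.ofReal (x ^ r) * ⨆ ξ ∈ Icc (1 : ℝ) x,
          ENNReal.ofReal (ξ ^ s) * ∫⁻ y in Ioc 1 ξ, ENNReal.ofReal (y ^ t * |f y|)
        ≤ ENNReal.ofReal (x ^ ρ) * ∫⁻ y in Ioc 1 x, ENNReal.ofReal (y ^ τ * |f y|) := by
    rcases le_or_gt s 0 with hs | hs
    · exact ⟨r, s + t, hr, by linarith, fun f x _ => by
        gcongr; exact iSup_rpow_mul_lintegral_Ioc_le_of_nonpos hs f⟩
    · refine ⟨r + s, t, hrs, hrst, fun f x (hx : 1 < x) => ?_⟩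
      rw [Real.rpow_add (one_pos.trans hx), ENNReal.ofReal_mul (by positivity), mul_assoc]
      gcongr
      exact iSup_rpow_mul_lintegral_Ioc_le_of_nonneg hs.le _
  refine ⟨1 / (-ρ - 1), one_div_pos.2 (by linarith), fun f hf => ?_⟩
  calc _ ≤ ∫⁻ x in Ioi 1, ENNReal.ofReal (x ^ ρ) *
          ∫⁻ y in Ioc 1 x, ENNReal.ofReal (y ^ τ * |f y|) :=
        setLIntegral_mono' measurableSet_Ioi (hsup f)
    _ ≤ ENNReal.ofReal (1 / (-ρ - 1)) * ∫⁻ y in Ioi 1, ENNReal.ofReal |f y| :=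
        lintegral_Ioi_rpow_mul_lintegral_Ioc_le_s8 hρ hρτ hf
    _ ≤ _ := by gcongr; norm_num
end

section
/- Let ν > -1, 1 < p < ∞, and let T be a linear operator defined on L¹((0,1), x^{2ν+1} dx) such that ‖Tf‖_{L^∞} ≤ A ‖f‖_{L¹(dμ_ν)} and ‖Tf‖_{L^∞} ≤ B ‖f‖_{L^∞} for all f, where dμ_ν(x) = x^{2ν+1} dx. Then there is a constant C (depending only on p and ν) such that ‖Tf‖_{L^∞((0,1), dμ_ν)} ≤ C A^{1/p} B^{1/p'} ‖f‖_{L^{p,∞}((0,1), dμ_ν)}, where 1/p + 1/p' = 1. -/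
open MeasureTheory Set ENNReal

/-- The measure `dμ_ν(x) = x^{2ν+1} dx` on `(0,1)`. -/
noncomputable def muNu (ν : ℝ) : Measure ℝ :=
  ((volume : Measure ℝ).restrict (Set.Ioo 0 1)).withDensity
    (fun x => ENNReal.ofReal (x ^ (2 * ν + 1)))

/-! Split `f` at a height `c`. By the layer-cake formula, the part above `c` has `L¹` norm
`∫₀^∞ μ {|f| > max t c} dt ≤ ∫₀^∞ M ^ p * max t c ^ (-p) dt = p / (p - 1) * M ^ p * c ^ (1 - p)`,
where `M` is the weak `L^p` quasinorm of `f`; the part below `c` is bounded by `c`.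
The two bounds on `T` then give `‖T f‖_∞ ≲ A M ^ p c ^ (1 - p) + B c`, and the choice
`c = (A / B) ^ (1 / p) * M` makes `A * M ^ p * c ^ (1 - p)` and `B * c` both equal to
`A ^ (1 / p) * B ^ (1 - 1 / p) * M`. -/

lemma lintegral_Ioi_max_rpow_neg {p c : ℝ} (hp : 1 < p) (hc : 0 < c) :
    ∫⁻ t in Ioi 0, ENNReal.ofReal (max t c ^ (-p)) =
      ENNReal.ofReal (p / (p - 1) * c ^ (1 - p)) := by
  have hsplit : Ioi (0 : ℝ) = Ioc 0 c ∪ Ioi c := (Ioc_union_Ioi_eq_Ioi hc.le).symm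
  have hhead :
      ∫⁻ t in Ioc 0 c, ENNReal.ofReal (max t c ^ (-p)) = ENNReal.ofReal (c ^ (1 - p)) := by
    rw [setLIntegral_congr_fun measurableSet_Ioc (g := fun _ => ENNReal.ofReal (c ^ (-p)))
      (fun t ht => by rw [max_eq_right ht.2]), setLIntegral_const, Real.volume_Ioc, sub_zero,
      ← ENNReal.ofReal_mul (by positivity), ← Real.rpow_add_one hc.ne']
    ring_nf
  have htail : ∫⁻ t in Ioi c, ENNReal.ofReal (max t c ^ (-p)) =
      ENNReal.ofReal (c ^ (1 - p) / (p - 1)) := by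
    rw [setLIntegral_congr_fun measurableSet_Ioi (g := fun t => ENNReal.ofReal (t ^ (-p)))
      (fun t ht => by rw [max_eq_left (le_of_lt ht)]),
      ← ofReal_integral_eq_lintegral_ofReal (integrableOn_Ioi_rpow_of_lt (by linarith) hc)
        (ae_restrict_of_forall_mem measurableSet_Ioi fun t ht =>
          Real.rpow_nonneg (hc.trans ht).le _),
      integral_Ioi_rpow_of_lt (by linarith) hc]
    congr 1
    rw [show -p + 1 = 1 - p by ring, ← neg_sub p 1, div_neg, neg_div, neg_neg]
  rw [hsplit, lintegral_union measurableSet_Ioi (Ioc_disjoint_Ioi le_rfl), hhead, htail,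
    ← ENNReal.ofReal_add (by positivity) (div_nonneg (by positivity) (by linarith))]
  have hp1 : p - 1 ≠ 0 := by linarith
  congr 1
  field_simp
  ring

section WeakType

variable {α : Type*} [MeasurableSpace α] {μ : Measure α}

noncomputable def weakLpNorm (f : α → ℝ) (p : ℝ) (μ : Measure α) : ℝ≥0∞ :=
  ⨆ (l : ℝ) (_ : 0 < l), ENNReal.ofReal l * μ {x | l < |f x|} ^ (1 / p)

lemma measure_lt_abs_le_weakLpNorm {f : α → ℝ} {p l : ℝ} (hp : 0 < p) (hl : 0 < l)
    (hf : weakLpNorm f p μ ≠ ⊤) :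
    μ {x | l < |f x|} ≤ ENNReal.ofReal ((weakLpNorm f p μ).toReal ^ p * l ^ (-p)) := by
  have hle : ENNReal.ofReal l * μ {x | l < |f x|} ^ (1 / p) ≤ weakLpNorm f p μ :=
    le_iSup₂ (f := fun l (_ : 0 < l) => ENNReal.ofReal l * μ {x | l < |f x|} ^ (1 / p)) l hl
  have hroot :
      μ {x | l < |f x|} ^ (1 / p) ≤ ENNReal.ofReal ((weakLpNorm f p μ).toReal / l) := by
    rw [ENNReal.ofReal_div_of_pos hl, ofReal_toReal hf,
      ENNReal.le_div_iff_mul_le (Or.inl (ENNReal.ofReal_pos.2 hl).ne') (Or.inl ofReal_ne_top),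
      mul_comm]
    exact hle
  calc μ {x | l < |f x|} = (μ {x | l < |f x|} ^ (1 / p)) ^ p := by
        rw [one_div, ENNReal.rpow_inv_rpow hp.ne']
    _ ≤ ENNReal.ofReal ((weakLpNorm f p μ).toReal / l) ^ p := by gcongr
    _ = _ := by
        rw [ENNReal.ofReal_rpow_of_nonneg (by positivity) hp.le,
          Real.div_rpow toReal_nonneg hl.le, Real.rpow_neg hl.le, div_eq_mul_inv]

lemma lintegral_enorm_indicator_lt_abs_le {f : α → ℝ} {p m c : ℝ} (hp : 1 < p) (hc : 0 < c)
    (hf : ∀ l, 0 < l → μ {x | l < |f x|} ≤ ENNReal.ofReal (m ^ p * l ^ (-p))) :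
    ∫⁻ x, ‖{x | c < |f x|}.indicator f x‖ₑ ∂μ ≤
      ENNReal.ofReal (m ^ p * (p / (p - 1) * c ^ (1 - p))) := by
  -- `f` need not be measurable, so the layer-cake formula is applied to a measurable minorant
  -- of the truncation with the same integral.
  obtain ⟨φ, hφ, hφle, hφeq⟩ :=
    exists_measurable_le_lintegral_eq μ (fun x => ‖{x | c < |f x|}.indicator f x‖ₑ)
  have hφ_top (x : α) : φ x ≠ ⊤ := ne_top_of_le_ne_top enorm_ne_top (hφle x)
  have hlevel (t : ℝ) (ht : 0 < t) : {x | t < (φ x).toReal} ⊆ {x | max t c < |f x|} := by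
    intro x hx
    have hgx : t < |{x | c < |f x|}.indicator f x| := hx.out.trans_le <|
      toReal_le_of_le_ofReal (abs_nonneg _) ((hφle x).trans_eq (Real.enorm_eq_ofReal_abs _))
    by_cases hx' : x ∈ {x | c < |f x|}
    · rw [indicator_of_mem hx'] at hgx
      exact max_lt hgx hx'
    · rw [indicator_of_notMem hx', abs_zero] at hgx
      exact absurd hgx (not_lt.2 ht.le)
  calc ∫⁻ x, ‖{x | c < |f x|}.indicator f x‖ₑ ∂μ
      = ∫⁻ x, ENNReal.ofReal (φ x).toReal ∂μ := by
        rw [hφeq]; simp_rw [ofReal_toReal (hφ_top _)]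
    _ = ∫⁻ t in Ioi 0, μ {x | t < (φ x).toReal} :=
        lintegral_eq_lintegral_meas_lt μ (ae_of_all _ fun _ => toReal_nonneg)
          hφ.ennreal_toReal.aemeasurable
    _ ≤ ∫⁻ t in Ioi 0, ENNReal.ofReal (m ^ p) * ENNReal.ofReal (max t c ^ (-p)) := by
        refine setLIntegral_mono' measurableSet_Ioi fun t ht => ?_
        rw [← ENNReal.ofReal_mul' (by positivity)]
        exact (measure_mono (hlevel t ht)).trans (hf _ (lt_max_of_lt_right hc))
    _ = _ := by
        rw [lintegral_const_mul' _ _ ofReal_ne_top, lintegral_Ioi_max_rpow_neg hp hc,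
          ← ENNReal.ofReal_mul' (by positivity)]

lemma eLpNorm_top_eq_zero_of_weakLpNorm_eq_zero {f : α → ℝ} {p : ℝ} (hp : 0 < p)
    (hf : weakLpNorm f p μ = 0) : eLpNorm f ⊤ μ = 0 := by
  refine le_antisymm (ENNReal.le_of_forall_pos_le_add fun ε hε _ => ?_) zero_le
  have hnull : μ {x | ε < |f x|} = 0 := by
    have := measure_lt_abs_le_weakLpNorm hp (NNReal.coe_pos.2 hε) (hf ▸ zero_ne_top)
    rwa [hf, toReal_zero, Real.zero_rpow hp.ne', zero_mul, ofReal_zero, nonpos_iff_eq_zero] at this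
  rw [zero_add, eLpNorm_exponent_top, ← ofReal_coe_nnreal]
  exact eLpNormEssSup_le_of_ae_bound (ae_iff.2 (by simpa using hnull))

lemma eLpNorm_top_map_le_of_truncation {T : (α → ℝ) → α → ℝ} {A B c : ℝ} (hc : 0 ≤ c)
    (hadd : ∀ f g, T (f + g) = T f + T g)
    (hTA : ∀ f, eLpNorm (T f) ⊤ μ ≤ ENNReal.ofReal A * eLpNorm f 1 μ)
    (hTB : ∀ f, eLpNorm (T f) ⊤ μ ≤ ENNReal.ofReal B * eLpNorm f ⊤ μ) (f : α → ℝ) :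
    eLpNorm (T f) ⊤ μ ≤ ENNReal.ofReal A * ∫⁻ x, ‖{x | c < |f x|}.indicator f x‖ₑ ∂μ +
      ENNReal.ofReal B * ENNReal.ofReal c := by
  set s := {x | c < |f x|}
  have hsplit : T f = T (s.indicator f) + T (sᶜ.indicator f) := by
    rw [← hadd, indicator_self_add_compl]
  have hsmall : eLpNorm (sᶜ.indicator f) ⊤ μ ≤ ENNReal.ofReal c := by
    rw [eLpNorm_exponent_top]
    refine eLpNormEssSup_le_of_ae_bound (ae_of_all _ fun x => ?_)
    by_cases hx : x ∈ s
    · simpa [indicator_of_notMem (notMem_compl_iff.2 hx)] using hc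
    · rw [indicator_of_mem (mem_compl hx), Real.norm_eq_abs]
      exact not_lt.1 hx
  calc eLpNorm (T f) ⊤ μ
      ≤ eLpNorm (T (s.indicator f)) ⊤ μ + eLpNorm (T (sᶜ.indicator f)) ⊤ μ := by
        simpa only [hsplit, eLpNorm_exponent_top] using eLpNormEssSup_add_le
    _ ≤ ENNReal.ofReal A * eLpNorm (s.indicator f) 1 μ +
        ENNReal.ofReal B * eLpNorm (sᶜ.indicator f) ⊤ μ := add_le_add (hTA _) (hTB _)
    _ ≤ _ := by
        rw [eLpNorm_one_eq_lintegral_enorm]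
        gcongr

lemma mul_rpow_mul_rpow_one_sub_eq_mul {p A B m : ℝ} (hp : p ≠ 0) (hA : 0 < A) (hB : 0 < B)
    (hm : 0 < m) :
    A * m ^ p * ((A / B) ^ (1 / p) * m) ^ (1 - p) = B * ((A / B) ^ (1 / p) * m) := by
  set c := (A / B) ^ (1 / p) * m
  have hc : 0 < c := by positivity
  have hcp : c ^ p = A / B * m ^ p := by
    rw [Real.mul_rpow (by positivity) hm.le, ← Real.rpow_mul (by positivity), one_div,
      inv_mul_cancel₀ hp, Real.rpow_one]
  rw [Real.rpow_sub hc, Real.rpow_one, hcp]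
  field_simp

lemma mul_div_rpow_one_div_eq {p A B : ℝ} (hA : 0 ≤ A) (hB : 0 < B) :
    B * (A / B) ^ (1 / p) = A ^ (1 / p) * B ^ (1 - 1 / p) := by
  rw [Real.div_rpow hA hB.le, Real.rpow_sub hB, Real.rpow_one]
  field_simp

theorem eLpNorm_top_map_le_weakLpNorm {T : (α → ℝ) → α → ℝ} {A B p : ℝ} (hp : 1 < p)
    (hA : 0 ≤ A) (hB : 0 ≤ B) (hadd : ∀ f g, T (f + g) = T f + T g)
    (hTA : ∀ f, eLpNorm (T f) ⊤ μ ≤ ENNReal.ofReal A * eLpNorm f 1 μ)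
    (hTB : ∀ f, eLpNorm (T f) ⊤ μ ≤ ENNReal.ofReal B * eLpNorm f ⊤ μ) (f : α → ℝ) :
    eLpNorm (T f) ⊤ μ ≤
      ENNReal.ofReal ((p / (p - 1) + 1) * A ^ (1 / p) * B ^ (1 - 1 / p)) * weakLpNorm f p μ := by
  have hp0 : 0 < p := zero_lt_one.trans hp
  rcases hA.eq_or_lt with rfl | hA
  · exact (hTA f).trans (by simp)
  rcases hB.eq_or_lt with rfl | hB
  · exact (hTB f).trans (by simp)
  set M := weakLpNorm f p μ
  rcases eq_or_ne M 0 with hM0 | hM0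
  · exact (hTB f).trans (by simp [eLpNorm_top_eq_zero_of_weakLpNorm_eq_zero hp0 hM0])
  rcases eq_or_ne M ⊤ with hMtop | hMtop
  · rw [hMtop, mul_top (by positivity)]
    exact le_top
  set m := M.toReal
  have hm : 0 < m := toReal_pos hM0 hMtop
  set c := (A / B) ^ (1 / p) * m
  calc eLpNorm (T f) ⊤ μ
      ≤ ENNReal.ofReal A * ∫⁻ x, ‖{x | c < |f x|}.indicator f x‖ₑ ∂μ +
          ENNReal.ofReal B * ENNReal.ofReal c :=
        eLpNorm_top_map_le_of_truncation (by positivity) hadd hTA hTB f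
    _ ≤ ENNReal.ofReal A * ENNReal.ofReal (m ^ p * (p / (p - 1) * c ^ (1 - p))) +
          ENNReal.ofReal B * ENNReal.ofReal c := by
        gcongr
        exact lintegral_enorm_indicator_lt_abs_le hp (by positivity)
          fun l hl => measure_lt_abs_le_weakLpNorm hp0 hl hMtop
    _ = ENNReal.ofReal ((p / (p - 1) + 1) * A ^ (1 / p) * B ^ (1 - 1 / p) * m) := by
        rw [← ofReal_mul hA.le, ← ofReal_mul hB.le,
          ← ofReal_add (by positivity) (by positivity)]
        congr 1
        calc A * (m ^ p * (p / (p - 1) * c ^ (1 - p))) + B * c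
            = p / (p - 1) * (A * m ^ p * c ^ (1 - p)) + B * c := by ring
          _ = (p / (p - 1) + 1) * (B * (A / B) ^ (1 / p)) * m := by
            rw [mul_rpow_mul_rpow_one_sub_eq_mul hp0.ne' hA hB hm]; ring
          _ = _ := by rw [mul_div_rpow_one_div_eq hA.le hB]; ring
    _ = _ := by rw [ofReal_mul (by positivity), ofReal_toReal hMtop]

end WeakType

theorem stmt9_general (ν p : ℝ) (hp1 : 1 < p) :
    ∃ C : ℝ, 0 < C ∧ ∀ (A B : ℝ), 0 ≤ A → 0 ≤ B →
      ∀ T : (ℝ → ℝ) → ℝ → ℝ,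
        (∀ f g : ℝ → ℝ, T (f + g) = T f + T g) →
        (∀ (c : ℝ) (f : ℝ → ℝ), T (c • f) = c • T f) →
        (∀ f : ℝ → ℝ, eLpNorm (T f) ⊤ (muNu ν) ≤
            ENNReal.ofReal A * eLpNorm f 1 (muNu ν)) →
        (∀ f : ℝ → ℝ, eLpNorm (T f) ⊤ (muNu ν) ≤
            ENNReal.ofReal B * eLpNorm f ⊤ (muNu ν)) →
        ∀ f : ℝ → ℝ,
          eLpNorm (T f) ⊤ (muNu ν) ≤
            ENNReal.ofReal (C * A ^ (1 / p) * B ^ (1 - 1 / p)) *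
              ⨆ (l : ℝ) (_ : 0 < l),
                ENNReal.ofReal l * (muNu ν {x | l < |f x|}) ^ (1 / p) := by
  exact ⟨p / (p - 1) + 1, by positivity, fun A B hA hB T hadd _ hTA hTB f =>
    eLpNorm_top_map_le_weakLpNorm hp1 hA hB hadd hTA hTB f⟩

theorem stmt9 (ν p : ℝ) (hν : -1 < ν) (hp1 : 1 < p) :
    ∃ C : ℝ, 0 < C ∧ ∀ (A B : ℝ), 0 ≤ A → 0 ≤ B →
      ∀ T : (ℝ → ℝ) → ℝ → ℝ,
        (∀ f g : ℝ → ℝ, T (f + g) = T f + T g) →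
        (∀ (c : ℝ) (f : ℝ → ℝ), T (c • f) = c • T f) →
        (∀ f : ℝ → ℝ, eLpNorm (T f) ⊤ (muNu ν) ≤
            ENNReal.ofReal A * eLpNorm f 1 (muNu ν)) →
        (∀ f : ℝ → ℝ, eLpNorm (T f) ⊤ (muNu ν) ≤
            ENNReal.ofReal B * eLpNorm f ⊤ (muNu ν)) →
        ∀ f : ℝ → ℝ,
          eLpNorm (T f) ⊤ (muNu ν) ≤
            ENNReal.ofReal (C * A ^ (1 / p) * B ^ (1 - 1 / p)) *
              ⨆ (l : ℝ) (_ : 0 < l),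
                ENNReal.ofReal l * (muNu ν {x | l < |f x|}) ^ (1 / p) :=
  stmt9_general ν p hp1
end

section
/- Let E ⊂ (0,1) be a measurable set of positive Lebesgue measure, (s_j) a sequence of positive reals with s_j → ∞, D a real constant, and (c_j) a sequence of reals. Suppose the functions F_j(x) = c_j (cos(s_j x + D) + r_j(x)) satisfy sup_{x∈E} |F_j(x)| ≤ K for all j, where sup_{x∈E}|r_j(x)| ≤ C/j. Then the sequence (c_j) is bounded. -/
/-!
Cantor–Lebesgue argument. By the Riemann–Lebesgue lemma `∫_E cos (2 (s_j x + D)) dx → 0`, so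
`∫_E cos² (s_j x + D) dx → |E| / 2`. Once `|r_j| ≤ 1/4` on `E` and this integral is at least `|E| / 4`,
the pointwise bound `|c_j cos (s_j x + D)| ≤ K + |c_j| / 4` on `E` integrates to
`c_j² |E| / 4 ≤ (K + |c_j| / 4)² |E|`, i.e. `|c_j| ≤ 4 K`.
-/

open MeasureTheory Filter Topology

theorem tendsto_integral_mul_cos_mul_add_atTop {f : ℝ → ℝ} (hf : Integrable f) (D : ℝ) :
    Tendsto (fun t => ∫ x, f x * Real.cos (t * x + D)) atTop (𝓝 0) := by
  have hfreq : Tendsto (fun t : ℝ => -t / (2 * Real.pi)) atTop (cocompact ℝ) := by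
    rw [cocompact_eq_atBot_atTop]
    exact (tendsto_neg_atTop_atBot.atBot_div_const (by positivity)).mono_right le_sup_left
  -- `∫ f x cos (t x + D) dx` is the real part of `e^{iD} 𝓕 f (-t / 2π)`.
  have hRL := ((Real.tendsto_integral_exp_smul_cocompact fun x => (f x : ℂ)).comp hfreq).const_mul
    (Complex.exp (D * Complex.I))
  rw [mul_zero] at hRL
  refine (Complex.continuous_re.tendsto 0 |>.comp hRL).congr fun t => ?_
  have hexp : ∀ x, Complex.exp (D * Complex.I) *
      (Real.fourierChar (-(x * (-t / (2 * Real.pi)))) • (f x : ℂ))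
      = f x * Complex.exp ((t * x + D : ℝ) * Complex.I) := by
    intro x
    rw [Circle.smul_def, Real.fourierChar_apply, smul_eq_mul, ← mul_assoc, ← Complex.exp_add]
    field_simp
    push_cast
    ring_nf
  have hint : Integrable fun x => (f x : ℂ) * Complex.exp ((t * x + D : ℝ) * Complex.I) := by
    refine hf.ofReal.mul_bdd ?_ (c := 1) (Eventually.of_forall fun x => ?_)
    · fun_prop
    · rw [Complex.norm_exp_ofReal_mul_I]
  simp only [Function.comp_apply, ← integral_const_mul, hexp]
  rw [← RCLike.re_eq_complex_re, ← integral_re hint]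
  simp only [RCLike.re_eq_complex_re, Complex.re_ofReal_mul, Complex.exp_ofReal_mul_I_re]

theorem tendsto_setIntegral_cos_sq {ι : Type*} {l : Filter ι} {t : ι → ℝ}
    (ht : Tendsto t l atTop) {E : Set ℝ} (hE : MeasurableSet E) (hEfin : volume E ≠ ⊤) (D : ℝ) :
    Tendsto (fun i => ∫ x in E, Real.cos (t i * x + D) ^ 2) l (𝓝 (volume.real E / 2)) := by
  have : IsFiniteMeasure (volume.restrict E) := isFiniteMeasure_restrict.2 hEfin
  have hind : Integrable (E.indicator 1) :=
    (integrable_indicator_iff hE).2 (integrableOn_const (C := (1 : ℝ)) hEfin)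
  have hosc := (tendsto_integral_mul_cos_mul_add_atTop hind (2 * D)).comp
    (ht.const_mul_atTop two_pos)
  have hsplit : ∀ i, ∫ x in E, Real.cos (t i * x + D) ^ 2
      = volume.real E / 2 + (∫ x, E.indicator 1 x * Real.cos (2 * t i * x + 2 * D)) / 2 := by
    intro i
    have hcos : ∀ x, E.indicator 1 x * Real.cos (2 * t i * x + 2 * D)
        = E.indicator (fun x => Real.cos (2 * (t i * x + D))) x := by
      intro x
      by_cases hx : x ∈ E <;> simp [hx, mul_add, mul_assoc]
    have hint : IntegrableOn (fun x => Real.cos (2 * (t i * x + D))) E :=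
      (integrable_const (1 : ℝ)).mono' (by fun_prop)
        (Eventually.of_forall fun x => (Real.norm_eq_abs _).trans_le (Real.abs_cos_le_one _))
    simp_rw [hcos, integral_indicator hE, Real.cos_sq]
    rw [integral_add (integrable_const _) (hint.div_const 2), setIntegral_const,
      integral_div, smul_eq_mul]
    ring
  simp_rw [hsplit]
  simpa using (hosc.div_const 2).const_add (volume.real E / 2)

theorem abs_le_four_mul_of_abs_mul_add_le {X : Type*} [MeasurableSpace X] {μ : Measure X}
    {E : Set X} (hEfin : μ E ≠ ⊤) (hEpos : 0 < μ.real E) {g ρ : X → ℝ} {a K : ℝ}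
    (hg : μ.real E / 4 ≤ ∫ x in E, g x ^ 2 ∂μ) (hρ : ∀ x ∈ E, |ρ x| ≤ 1 / 4)
    (hK : ∀ x ∈ E, |a * (g x + ρ x)| ≤ K) : |a| ≤ 4 * K := by
  obtain ⟨x₀, hx₀⟩ := nonempty_of_measure_ne_zero ((measureReal_ne_zero_iff hEfin).1 hEpos.ne')
  have hB : 0 ≤ K + |a| / 4 := by
    linarith [abs_nonneg (a * (g x₀ + ρ x₀)), hK x₀ hx₀, abs_nonneg a]
  have hpt : ∀ x ∈ E, |a * g x| ≤ K + |a| / 4 := fun x hx =>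
    calc |a * g x| = |a * (g x + ρ x) - a * ρ x| := by congr 1; ring
      _ ≤ |a * (g x + ρ x)| + |a| * |ρ x| := (abs_sub _ _).trans_eq (by rw [abs_mul a (ρ x)])
      _ ≤ K + |a| * (1 / 4) := by gcongr; exacts [hK x hx, hρ x hx]
      _ = K + |a| / 4 := by ring
  have hint : a ^ 2 * ∫ x in E, g x ^ 2 ∂μ ≤ (K + |a| / 4) ^ 2 * μ.real E :=
    calc a ^ 2 * ∫ x in E, g x ^ 2 ∂μ = ∫ x in E, (a * g x) ^ 2 ∂μ := by
          rw [← integral_const_mul]; simp_rw [mul_pow]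
      _ ≤ ‖∫ x in E, (a * g x) ^ 2 ∂μ‖ := Real.le_norm_self _
      _ ≤ (K + |a| / 4) ^ 2 * μ.real E := norm_setIntegral_le_of_norm_le_const hEfin.lt_top
          fun x hx => by
            rw [Real.norm_eq_abs, abs_pow]
            exact pow_le_pow_left₀ (abs_nonneg _) (hpt x hx) 2
  have hsq : a ^ 2 ≤ (2 * (K + |a| / 4)) ^ 2 := by nlinarith [sq_nonneg a]
  linarith [abs_le_of_sq_le_sq hsq (by positivity)]

theorem stmt18_general (E : Set ℝ) (hE : MeasurableSet E) (hE' : E ⊆ Set.Ioo 0 1)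
    (hEpos : 0 < volume E) (s : ℕ → ℝ)
    (hstend : Tendsto s atTop atTop) (D : ℝ) (c : ℕ → ℝ) (r : ℕ → ℝ → ℝ)
    (C K : ℝ)
    (hr : ∀ j : ℕ, 1 ≤ j → ∀ x ∈ E, |r j x| ≤ C / (j : ℝ))
    (hF : ∀ j : ℕ, ∀ x ∈ E, |c j * (Real.cos (s j * x + D) + r j x)| ≤ K) :
    ∃ M : ℝ, ∀ j, |c j| ≤ M := by
  have hEfin : volume E ≠ ⊤ := ((measure_mono hE').trans_lt (by simp)).ne
  have hEreal : 0 < volume.real E := ENNReal.toReal_pos hEpos.ne' hEfin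
  have hcos : ∀ᶠ j in atTop, volume.real E / 4 ≤ ∫ x in E, Real.cos (s j * x + D) ^ 2 :=
    (tendsto_setIntegral_cos_sq hstend hE hEfin D).eventually (eventually_ge_nhds (by linarith))
  have hsmall : ∀ᶠ j in atTop, ∀ x ∈ E, |r j x| ≤ 1 / 4 := by
    filter_upwards [eventually_ge_atTop 1, (tendsto_const_div_atTop_nhds_zero_nat C).eventually
      (eventually_le_nhds (by norm_num : (0 : ℝ) < 1 / 4))] with j hj hCj x hx
    exact (hr j hj x hx).trans hCj
  have hbound : ∀ᶠ j in atTop, |c j| ≤ 4 * K := by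
    filter_upwards [hcos, hsmall] with j hj hrj
    exact abs_le_four_mul_of_abs_mul_add_le hEfin hEreal hj hrj (hF j)
  obtain ⟨M, hM⟩ := (isBoundedUnder_of_eventually_le hbound).bddAbove_range
  exact ⟨M, fun j => hM (Set.mem_range_self j)⟩

theorem stmt18 (E : Set ℝ) (hE : MeasurableSet E) (hE' : E ⊆ Set.Ioo 0 1)
    (hEpos : 0 < volume E) (s : ℕ → ℝ) (hs : ∀ j, 0 < s j)
    (hstend : Tendsto s atTop atTop) (D : ℝ) (c : ℕ → ℝ) (r : ℕ → ℝ → ℝ)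
    (hrmeas : ∀ j, Measurable (r j)) (C K : ℝ)
    (hr : ∀ j : ℕ, 1 ≤ j → ∀ x ∈ E, |r j x| ≤ C / (j : ℝ))
    (hF : ∀ j : ℕ, ∀ x ∈ E, |c j * (Real.cos (s j * x + D) + r j x)| ≤ K) :
    ∃ M : ℝ, ∀ j, |c j| ≤ M :=
  stmt18_general E hE hE' hEpos s hstend D c r C K hr hF
end
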